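/- arXiv:2007.14157 — 3 statements merged into one kernel-verified Lean document; each statement's English description precedes it below -/
import Mathlib

section
/- Define the differential operator τ on smooth functions φ : {t > 0} × ℝ → ℝ by τ(φ) = t²·∂²φ/∂t² + (1−n)·t·∂φ/∂t + t²·∂²φ/∂x² with n = 1 (the Laplace–Beltrami operator of the hyperbolic plane ℝH² in these coordinates, with n = 1). Then the function φ(t,x) = x⁶·log(t) − 15·x⁴·t²·(log(t) − 2) + 5·x²·t⁴·(3·log(t) − 8) − (t⁶/15)·(15·log(t) − 46) satisfies τ(τ(φ)) = 0 but τ(φ) ≠ 0; that is, φ is proper biharmonic on ℝH². -/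
/-!
With `n = 1` the operator is `τ = t² Δ`, `Δ` the Euclidean Laplacian in `(t, x)`.
A direct computation gives `τ φ = ψ` on `t ≠ 0`, where `ψ = Re ((t + i x)⁶)` is a harmonic
polynomial. Since `τ` is a local operator, `τ (τ φ) = t² Δ ψ = 0` for `t > 0`, while
`τ φ (1, 0) = ψ (1, 0) = 1`.
-/

/-- The Laplace–Beltrami operator of the real hyperbolic plane `ℝH²` in half-space
coordinates `(t, x)`, `t > 0`, with `n = 1`:
`τ(φ) = t²·φ_tt + (1 − n)·t·φ_t + t²·φ_xx`. -/
noncomputable def tauRH2 (φ : ℝ → ℝ → ℝ) : ℝ → ℝ → ℝ := fun t x =>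
  t ^ 2 * deriv (deriv (fun s => φ s x)) t
    + (1 - (1 : ℝ)) * t * deriv (fun s => φ s x) t
    + t ^ 2 * deriv (deriv (fun y => φ t y)) x

open Filter Topology Real

theorem deriv_deriv_eq_of_hasDerivAt {𝕜 F : Type*} [NontriviallyNormedField 𝕜]
    [NormedAddCommGroup F] [NormedSpace 𝕜 F] {f f' : 𝕜 → F} {f'' : F} {t : 𝕜}
    (hf : ∀ᶠ s in 𝓝 t, HasDerivAt f (f' s) s) (hf' : HasDerivAt f' f'' t) :
    deriv (deriv f) t = f'' := by
  have h : deriv f =ᶠ[𝓝 t] f' := hf.mono fun _ hs => hs.deriv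
  rw [h.deriv_eq, hf'.deriv]

theorem deriv_deriv_even_sextic (a b c d y : ℝ) :
    deriv (deriv fun y => a * y ^ 6 + b * y ^ 4 + c * y ^ 2 + d) y
      = 30 * a * y ^ 4 + 12 * b * y ^ 2 + 2 * c := by
  refine deriv_deriv_eq_of_hasDerivAt
    (f' := fun y => 6 * a * y ^ 5 + 4 * b * y ^ 3 + 2 * c * y) (.of_forall fun y => ?_) ?_
  · refine ((((hasDerivAt_pow 6 y).const_mul a).add ((hasDerivAt_pow 4 y).const_mul b)).add
      ((hasDerivAt_pow 2 y).const_mul c)).add_const d |>.congr_deriv ?_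
    push_cast; ring
  · refine (((hasDerivAt_pow 5 y).const_mul (6 * a)).add
      ((hasDerivAt_pow 3 y).const_mul (4 * b))).add
      ((hasDerivAt_id' y).const_mul (2 * c)) |>.congr_deriv ?_
    push_cast; ring

theorem tauRH2_eq_sq_mul_laplacian (φ : ℝ → ℝ → ℝ) (t x : ℝ) :
    tauRH2 φ t x = t ^ 2 * (deriv (deriv (φ · x)) t + deriv (deriv (φ t ·)) x) := by
  simp only [tauRH2]; ring

theorem tauRH2_congr {φ ψ : ℝ → ℝ → ℝ} {U : Set ℝ} (hU : IsOpen U)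
    (h : ∀ t ∈ U, ∀ x, φ t x = ψ t x) {t : ℝ} (ht : t ∈ U) (x : ℝ) :
    tauRH2 φ t x = tauRH2 ψ t x := by
  have h_t : (φ · x) =ᶠ[𝓝 t] (ψ · x) :=
    eventually_of_mem (hU.mem_nhds ht) fun s hs => h s hs x
  have h_x : φ t = ψ t := funext (h t ht)
  rw [tauRH2_eq_sq_mul_laplacian, tauRH2_eq_sq_mul_laplacian, h_t.deriv.deriv_eq, h_x]

namespace RH2

noncomputable def phi (t x : ℝ) : ℝ :=
  x ^ 6 * log t - 15 * x ^ 4 * t ^ 2 * (log t - 2)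
    + 5 * x ^ 2 * t ^ 4 * (3 * log t - 8)
    - t ^ 6 / 15 * (15 * log t - 46)

def psi (t x : ℝ) : ℝ :=
  t ^ 6 - 15 * t ^ 4 * x ^ 2 + 15 * t ^ 2 * x ^ 4 - x ^ 6

theorem hasDerivAt_phi_fst (x : ℝ) {t : ℝ} (ht : t ≠ 0) :
    HasDerivAt (phi · x) (x ^ 6 * t⁻¹ - 30 * x ^ 4 * (t * log t) + 45 * x ^ 4 * t
      + 60 * x ^ 2 * (t ^ 3 * log t) - 145 * x ^ 2 * t ^ 3 - 6 * (t ^ 5 * log t)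
      + 87 / 5 * t ^ 5) t := by
  have hlog := hasDerivAt_log ht
  refine (((hlog.const_mul (x ^ 6)).sub (((hasDerivAt_pow 2 t).const_mul (15 * x ^ 4)).mul
    (hlog.sub_const 2))).add (((hasDerivAt_pow 4 t).const_mul (5 * x ^ 2)).mul
    ((hlog.const_mul 3).sub_const 8))).sub (((hasDerivAt_pow 6 t).div_const 15).mul
    ((hlog.const_mul 15).sub_const 46)) |>.congr_deriv ?_
  field_simp
  ring

theorem deriv_deriv_phi_fst (x : ℝ) {t : ℝ} (ht : t ≠ 0) :
    deriv (deriv (phi · x)) t = -x ^ 6 / t ^ 2 - 30 * x ^ 4 * log t + 15 * x ^ 4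
      + 180 * x ^ 2 * t ^ 2 * log t - 375 * x ^ 2 * t ^ 2 - 30 * t ^ 4 * log t + 81 * t ^ 4 := by
  refine deriv_deriv_eq_of_hasDerivAt
    ((eventually_ne_nhds ht).mono fun s hs => hasDerivAt_phi_fst x hs) ?_
  have hlog := hasDerivAt_log ht
  have hid := hasDerivAt_id' t
  refine (((((((hasDerivAt_inv ht).const_mul (x ^ 6)).sub
    ((hid.mul hlog).const_mul (30 * x ^ 4))).add (hid.const_mul (45 * x ^ 4))).add
    (((hasDerivAt_pow 3 t).mul hlog).const_mul (60 * x ^ 2))).sub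
    ((hasDerivAt_pow 3 t).const_mul (145 * x ^ 2))).sub
    (((hasDerivAt_pow 5 t).mul hlog).const_mul 6)).add
    ((hasDerivAt_pow 5 t).const_mul (87 / 5)) |>.congr_deriv ?_
  field_simp
  ring

theorem tauRH2_phi (x : ℝ) {t : ℝ} (ht : t ≠ 0) : tauRH2 phi t x = psi t x := by
  have h_x : phi t = fun y => log t * y ^ 6 + (-15 * t ^ 2 * (log t - 2)) * y ^ 4
      + 5 * t ^ 4 * (3 * log t - 8) * y ^ 2 + (-(t ^ 6 / 15 * (15 * log t - 46))) := by
    ext y; simp only [phi]; ring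
  rw [tauRH2_eq_sq_mul_laplacian, deriv_deriv_phi_fst x ht, h_x, deriv_deriv_even_sextic, psi]
  field_simp
  ring

theorem tauRH2_psi (t x : ℝ) : tauRH2 psi t x = 0 := by
  have h_t : (psi · x) =
      fun s => 1 * s ^ 6 + (-15 * x ^ 2) * s ^ 4 + 15 * x ^ 4 * s ^ 2 + -x ^ 6 := by
    ext s; simp only [psi]; ring
  have h_x : psi t =
      fun y => -1 * y ^ 6 + 15 * t ^ 2 * y ^ 4 + (-15 * t ^ 4) * y ^ 2 + t ^ 6 := by
    ext y; simp only [psi]; ring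
  rw [tauRH2_eq_sq_mul_laplacian, h_t, h_x, deriv_deriv_even_sextic, deriv_deriv_even_sextic]
  ring

theorem tauRH2_tauRH2_phi (x : ℝ) {t : ℝ} (ht : t ≠ 0) : tauRH2 (tauRH2 phi) t x = 0 := by
  rw [tauRH2_congr isOpen_compl_singleton (fun s hs y => tauRH2_phi y hs) ht, tauRH2_psi]

end RH2

/-- the displayed function is proper biharmonic on `ℝH²`. -/
theorem stmt_1 :
    letI φ : ℝ → ℝ → ℝ := fun t x =>
      x ^ 6 * Real.log t - 15 * x ^ 4 * t ^ 2 * (Real.log t - 2)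
        + 5 * x ^ 2 * t ^ 4 * (3 * Real.log t - 8)
        - t ^ 6 / 15 * (15 * Real.log t - 46)
    (∀ t > (0 : ℝ), ∀ x : ℝ, tauRH2 (tauRH2 φ) t x = 0) ∧
      (∃ t > (0 : ℝ), ∃ x : ℝ, tauRH2 φ t x ≠ 0) := by
  refine ⟨fun t ht x => RH2.tauRH2_tauRH2_phi x ht.ne', 1, one_pos, 0, ?_⟩
  show tauRH2 RH2.phi 1 0 ≠ 0
  rw [RH2.tauRH2_phi 0 one_ne_zero]
  norm_num [RH2.psi]
end

section
/- Let n ≥ 1 and let τ be the operator on smooth functions φ : {t>0} × ℝⁿ → ℂ given by τ(φ) = t²·φ_tt + (1−n)·t·φ_t + t²·Δ_x φ (the Laplace–Beltrami operator of ℝH^{n+1}). If H : ℝⁿ → ℂ is harmonic (Δ_x H = 0), then for every positive integer p the function φ_p(t,x) = (a + b·tⁿ)·log(t)^{p−1}·H(x) satisfies τ^p(φ_p) = 0; moreover if (a,b) ≠ (0,0) and H ≠ 0 then τ^{p−1}(φ_p) ≠ 0, so φ_p is proper p-harmonic. -/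
open scoped Real

/-- The Euclidean Laplacian in the `x`-variables, acting coordinatewise. -/
noncomputable def lapE (n : ℕ) (H : (Fin n → ℝ) → ℂ) : (Fin n → ℝ) → ℂ := fun x =>
  ∑ i, deriv (deriv (fun s => H (Function.update x i s))) (x i)

/-- The Laplace–Beltrami operator of `ℝH^{n+1}` in half-space coordinates:
`τ(φ) = t²·φ_tt + (1−n)·t·φ_t + t²·Δ_x φ`. -/
noncomputable def tauRHn (n : ℕ) (φ : ℝ → (Fin n → ℝ) → ℂ) : ℝ → (Fin n → ℝ) → ℂ :=
  fun t x =>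
    (t : ℂ) ^ 2 * deriv (deriv (fun s => φ s x)) t
      + (1 - (n : ℂ)) * (t : ℂ) * deriv (fun s => φ s x) t
      + (t : ℂ) ^ 2 * lapE n (φ t) x

/-!
In the variable `s = log t` the radial part `t²∂ₜ² + (1 − n)t∂ₜ` of `τ` is `∂ₛ² − n∂ₛ`, and
conjugating by `tⁿ = e^{ns}` turns it into `∂ₛ² + n∂ₛ`. Hence on `(A(log t) + tⁿ B(log t))·H(x)`
with `A, B` polynomials and `H` harmonic, `τ` acts as `(A, B) ↦ (A'' − nA', B'' + nB')`.
Each operator `D(D + c)` lowers the degree of a polynomial by one and sends `Xᵏ` to `cᵏ k!` after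
`k` steps, so `τ^p` kills the data `(a X^{p−1}, b X^{p−1})` of `φ_p`, while `τ^{p−1}` leaves
`((−n)^{p−1} a + n^{p−1} b tⁿ) (p−1)! H(x)`, which is not identically zero.
-/

open Polynomial

namespace Polynomial

variable {R : Type*} [CommSemiring R]

noncomputable def radialPart (c : R) : Module.End R R[X] :=
  (derivative + c • 1) * derivative

theorem radialPart_apply (c : R) (A : R[X]) :
    radialPart c A = derivative (derivative A) + c • derivative A := rfl

theorem radialPart_pow (c : R) (m : ℕ) :
    radialPart c ^ m = (derivative + c • 1) ^ m * derivative ^ m :=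
  ((Commute.refl _).add_left ((Commute.one_left _).smul_left c)).mul_pow m

theorem radialPart_pow_apply_eq_zero (c : R) {m : ℕ} {A : R[X]} (hA : A.natDegree < m) :
    (radialPart c ^ m) A = 0 := by
  rw [radialPart_pow, Module.End.mul_apply, Module.End.pow_apply derivative,
    iterate_derivative_eq_zero hA, map_zero]

theorem derivative_add_smul_one_pow_apply_C (c r : R) (m : ℕ) :
    ((derivative + c • 1 : Module.End R R[X]) ^ m) (C r) = C (c ^ m * r) := by
  induction m with
  | zero => simp
  | succ m ih =>
    rw [pow_succ', Module.End.mul_apply, ih, LinearMap.add_apply, derivative_C, zero_add,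
      LinearMap.smul_apply, Module.End.one_apply, smul_C, smul_eq_mul, pow_succ', mul_assoc]

theorem radialPart_pow_apply_C_mul_X_pow (c a : R) (k : ℕ) :
    (radialPart c ^ k) (C a * X ^ k) = C (a * (c ^ k * k.factorial)) := by
  rw [radialPart_pow, Module.End.mul_apply, Module.End.pow_apply derivative,
    iterate_derivative_C_mul, iterate_derivative_X_pow_eq_C_mul, Nat.descFactorial_self,
    Nat.sub_self, pow_zero, mul_one, ← C_mul, derivative_add_smul_one_pow_apply_C]
  ring_nf

end Polynomial

noncomputable def logProfile (n : ℕ) (A B : ℂ[X]) (t : ℝ) : ℂ :=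
  A.eval (Real.log t : ℂ) + (t : ℂ) ^ n * B.eval (Real.log t : ℂ)

theorem hasDerivAt_logProfile (n : ℕ) (A B : ℂ[X]) {t : ℝ} (ht : t ≠ 0) :
    HasDerivAt (logProfile n A B)
      (logProfile n (derivative A) ((n : ℂ) • B + derivative B) t / t) t := by
  have hlog : HasDerivAt (fun s : ℝ => (Real.log s : ℂ)) ((t : ℂ)⁻¹) t := by
    simpa using (Real.hasDerivAt_log ht).ofReal_comp
  have hpow : HasDerivAt (fun s : ℝ => (s : ℂ) ^ n) (n * (t : ℂ) ^ (n - 1)) t :=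
    (hasDerivAt_pow n (t : ℂ)).comp_ofReal
  refine (((A.hasDerivAt _).comp t hlog).add
    (hpow.mul ((B.hasDerivAt _).comp t hlog))).congr_deriv ?_
  have htC : (t : ℂ) ≠ 0 := by exact_mod_cast ht
  have hpow_pred : (n : ℂ) * (t : ℂ) ^ (n - 1) = n * (t : ℂ) ^ n / t := by
    rcases n with _ | n
    · simp
    · rw [Nat.add_sub_cancel, pow_succ]
      field_simp
  simp only [logProfile, eval_add, eval_smul, smul_eq_mul, Function.comp_apply, hpow_pred]
  field_simp

theorem deriv_logProfile (n : ℕ) (A B : ℂ[X]) {t : ℝ} (ht : t ≠ 0) :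
    deriv (logProfile n A B) t = logProfile n (derivative A) ((n : ℂ) • B + derivative B) t / t :=
  (hasDerivAt_logProfile n A B ht).deriv

theorem deriv_deriv_logProfile (n : ℕ) (A B : ℂ[X]) {t : ℝ} (ht : t ≠ 0) :
    deriv (deriv (logProfile n A B)) t =
      (logProfile n (derivative (derivative A))
          ((n : ℂ) • ((n : ℂ) • B + derivative B) + derivative ((n : ℂ) • B + derivative B)) t -
        logProfile n (derivative A) ((n : ℂ) • B + derivative B) t) / (t : ℂ) ^ 2 := by
  have htC : (t : ℂ) ≠ 0 := by exact_mod_cast ht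
  have hderiv : deriv (logProfile n A B) =ᶠ[nhds t]
      fun s => logProfile n (derivative A) ((n : ℂ) • B + derivative B) s / s :=
    (eventually_ne_nhds ht).mono fun s hs => deriv_logProfile n A B hs
  have hid : HasDerivAt (fun s : ℝ => (s : ℂ)) 1 t := by
    simpa using (hasDerivAt_id t).ofReal_comp
  have hquot : HasDerivAt
      (fun s : ℝ => logProfile n (derivative A) ((n : ℂ) • B + derivative B) s / s) _ t :=
    (hasDerivAt_logProfile n (derivative A) ((n : ℂ) • B + derivative B) ht).div hid htC
  rw [hderiv.deriv_eq, hquot.deriv]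
  field_simp

theorem tauRHn_congr (n : ℕ) {φ ψ : ℝ → (Fin n → ℝ) → ℂ} (h : ∀ s ≠ 0, φ s = ψ s) {t : ℝ}
    (ht : t ≠ 0) (x : Fin n → ℝ) :
    tauRHn n φ t x = tauRHn n ψ t x := by
  have hslice : ∀ s ≠ 0, (fun u => φ u x) =ᶠ[nhds s] fun u => ψ u x := fun s hs =>
    (eventually_ne_nhds hs).mono fun u hu => congrFun (h u hu) x
  have hderiv : deriv (fun s => φ s x) =ᶠ[nhds t] deriv fun s => ψ s x :=
    (eventually_ne_nhds ht).mono fun s hs => (hslice s hs).deriv_eq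
  simp only [tauRHn, (hslice t ht).deriv_eq, hderiv.deriv_eq, h t ht]

theorem lapE_const_mul (n : ℕ) (c : ℂ) (H : (Fin n → ℝ) → ℂ) (x : Fin n → ℝ) :
    lapE n (fun y => c * H y) x = c * lapE n H x := by
  simp only [lapE, Finset.mul_sum, deriv_const_mul_field', deriv_const_mul_field]

theorem tauRHn_logProfile_mul (n : ℕ) {H : (Fin n → ℝ) → ℂ} (hH : ∀ x, lapE n H x = 0)
    (A B : ℂ[X]) {t : ℝ} (ht : t ≠ 0) (x : Fin n → ℝ) :
    tauRHn n (fun s y => logProfile n A B s * H y) t x =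
      logProfile n (radialPart (-(n : ℂ)) A) (radialPart (n : ℂ) B) t * H x := by
  have htC : (t : ℂ) ≠ 0 := by exact_mod_cast ht
  have hradial : logProfile n (radialPart (-(n : ℂ)) A) (radialPart (n : ℂ) B) t =
      logProfile n (derivative (derivative A))
          ((n : ℂ) • ((n : ℂ) • B + derivative B) + derivative ((n : ℂ) • B + derivative B)) t -
        n * logProfile n (derivative A) ((n : ℂ) • B + derivative B) t := by
    simp only [logProfile, radialPart_apply, derivative_add, derivative_smul, eval_add, eval_smul,
      smul_eq_mul]
    ring
  simp only [tauRHn, deriv_mul_const_field', deriv_mul_const_field, lapE_const_mul, hH,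
    deriv_deriv_logProfile n A B ht, deriv_logProfile n A B ht, hradial]
  field_simp
  ring

theorem tauRHn_iterate_logProfile_mul (n : ℕ) {H : (Fin n → ℝ) → ℂ} (hH : ∀ x, lapE n H x = 0)
    (A B : ℂ[X]) (m : ℕ) {t : ℝ} (ht : t ≠ 0) (x : Fin n → ℝ) :
    (tauRHn n)^[m] (fun s y => logProfile n A B s * H y) t x =
      logProfile n ((radialPart (-(n : ℂ)) ^ m) A) ((radialPart (n : ℂ) ^ m) B) t * H x := by
  induction m generalizing t x with
  | zero => rfl
  | succ m ih =>
    rw [Function.iterate_succ_apply', pow_succ', pow_succ', Module.End.mul_apply,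
      Module.End.mul_apply, ← tauRHn_logProfile_mul n hH _ _ ht x]
    exact tauRHn_congr n (fun s hs => funext (ih hs)) ht x

theorem exists_pos_add_pow_mul_ne_zero {n : ℕ} (hn : n ≠ 0) {α β : ℂ} (h : (α, β) ≠ (0, 0)) :
    ∃ t > (0 : ℝ), α + (t : ℂ) ^ n * β ≠ 0 := by
  by_cases h₁ : α + β = 0
  · have hβ : β ≠ 0 := by
      rintro rfl
      exact h (by simpa using h₁)
    have h₂ : (2 : ℂ) ^ n ≠ 1 := by
      exact_mod_cast (Nat.one_lt_pow hn one_lt_two).ne'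
    refine ⟨2, two_pos, fun h₃ => h₂ ?_⟩
    have : ((2 : ℂ) ^ n - 1) * β = 0 := by
      push_cast at h₃
      linear_combination h₃ - h₁
    simpa [sub_eq_zero, hβ] using this
  · exact ⟨1, one_pos, by simpa using h₁⟩

/-- for harmonic `H`, `φ_p(t,x) = (a + b·tⁿ)·log(t)^{p−1}·H(x)` is
`p`-harmonic on `ℝH^{n+1}`, and proper `p`-harmonic if `(a,b) ≠ (0,0)` and `H ≠ 0`. -/
theorem stmt_3 (n : ℕ) (hn : 1 ≤ n) (H : (Fin n → ℝ) → ℂ) (hH : ∀ x, lapE n H x = 0)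
    (p : ℕ) (hp : 1 ≤ p) (a b : ℂ) :
    letI φp : ℝ → (Fin n → ℝ) → ℂ := fun t x =>
      (a + b * (t : ℂ) ^ n) * (Real.log t : ℂ) ^ (p - 1) * H x
    (∀ t > (0 : ℝ), ∀ x, (tauRHn n)^[p] φp t x = 0) ∧
      ((a, b) ≠ (0, 0) → H ≠ 0 →
        ∃ t > (0 : ℝ), ∃ x, (tauRHn n)^[p - 1] φp t x ≠ 0) := by
  have hφp : (fun (t : ℝ) (x : Fin n → ℝ) =>
      (a + b * (t : ℂ) ^ n) * (Real.log t : ℂ) ^ (p - 1) * H x) =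
      fun t x => logProfile n (C a * X ^ (p - 1)) (C b * X ^ (p - 1)) t * H x := by
    funext t x
    simp only [logProfile, eval_mul, eval_C, eval_pow, eval_X]
    ring
  simp only [hφp]
  have hdeg (c : ℂ) : (C c * X ^ (p - 1)).natDegree < p :=
    (natDegree_C_mul_X_pow_le c _).trans_lt (Nat.sub_lt hp one_pos)
  refine ⟨fun t ht x => ?_, fun hab hH₀ => ?_⟩
  · rw [tauRHn_iterate_logProfile_mul n hH _ _ _ ht.ne' x,
      radialPart_pow_apply_eq_zero _ (hdeg a), radialPart_pow_apply_eq_zero _ (hdeg b)]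
    simp [logProfile]
  · obtain ⟨x, hx⟩ := Function.ne_iff.mp hH₀
    have hn₀ : n ≠ 0 := by omega
    have hcoeff (c : ℂ) (hc : c ≠ 0) : c ^ (p - 1) * ((p - 1).factorial : ℂ) ≠ 0 :=
      mul_ne_zero (pow_ne_zero _ hc) (by exact_mod_cast (p - 1).factorial_ne_zero)
    obtain ⟨t, ht, hne⟩ := exists_pos_add_pow_mul_ne_zero hn₀
      (α := a * ((-(n : ℂ)) ^ (p - 1) * ((p - 1).factorial : ℂ)))
      (β := b * ((n : ℂ) ^ (p - 1) * ((p - 1).factorial : ℂ)))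
      (by simpa [hcoeff _ (Nat.cast_ne_zero.mpr hn₀),
        hcoeff _ (neg_ne_zero.mpr (Nat.cast_ne_zero.mpr hn₀))] using hab)
    refine ⟨t, ht, x, ?_⟩
    rw [tauRHn_iterate_logProfile_mul n hH _ _ _ ht.ne' x,
      radialPart_pow_apply_C_mul_X_pow, radialPart_pow_apply_C_mul_X_pow]
    simp only [logProfile, eval_C]
    exact mul_ne_zero hne hx
end

section
/- Let T(h) = h_xx + h_yy + x·h_yz − y·h_xz + ((x²+y²)/4)·h_zz and U(h) = h_zz be operators on polynomials in ℝ[x,y,z]. Then for every polynomial h, there exists r ∈ ℕ such that every composition of r operators from {T, U} applied to h is zero. -/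
/-- Partial derivative in `x` for functions of `(x,y,z)`. -/
noncomputable def qdX (f : ℝ → ℝ → ℝ → ℝ) : ℝ → ℝ → ℝ → ℝ :=
  fun x y z => deriv (fun s => f s y z) x

/-- Partial derivative in `y`. -/
noncomputable def qdY (f : ℝ → ℝ → ℝ → ℝ) : ℝ → ℝ → ℝ → ℝ :=
  fun x y z => deriv (fun s => f x s z) y

/-- Partial derivative in `z`. -/
noncomputable def qdZ (f : ℝ → ℝ → ℝ → ℝ) : ℝ → ℝ → ℝ → ℝ :=
  fun x y z => deriv (fun s => f x y s) z

/-- `T(h) = h_xx + h_yy + x·h_yz − y·h_xz + ((x²+y²)/4)·h_zz`. -/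
noncomputable def opT (f : ℝ → ℝ → ℝ → ℝ) : ℝ → ℝ → ℝ → ℝ := fun x y z =>
  qdX (qdX f) x y z + qdY (qdY f) x y z + x * qdY (qdZ f) x y z - y * qdX (qdZ f) x y z
    + (x ^ 2 + y ^ 2) / 4 * qdZ (qdZ f) x y z

/-- `U(h) = h_zz`. -/
noncomputable def opU (f : ℝ → ℝ → ℝ → ℝ) : ℝ → ℝ → ℝ → ℝ := fun x y z =>
  qdZ (qdZ f) x y z

/-!
Give `x` and `y` weight 1 and `z` weight 2, the natural grading of the Heisenberg algebra.
Every term of `T` and `U` lowers the weighted degree by at least 2: `h_xx`, `h_yy` by 2,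
`x·h_yz` and `y·h_xz` by `3 - 1`, `((x²+y²)/4)·h_zz` by `4 - 2`, and `h_zz` by 4. So any
composition of more than `deg h / 2` of these operators kills `h`. On polynomial functions the
real partial derivatives `qdX`, `qdY`, `qdZ` are the formal ones `pderiv 0`, `pderiv 1`,
`pderiv 2`.
-/

open MvPolynomial

section Derivative

variable {𝕜 σ : Type*} [NontriviallyNormedField 𝕜] [DecidableEq σ]

theorem hasDerivAt_update_apply (v : σ → 𝕜) (i j : σ) (t : 𝕜) :
    HasDerivAt (fun s => Function.update v i s j) ((Pi.single i 1 : σ → 𝕜) j) t := by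
  rcases eq_or_ne j i with rfl | hji
  · simpa using hasDerivAt_id' t
  · simpa [hji] using hasDerivAt_const t (v j)

theorem MvPolynomial.hasDerivAt_eval_update (P : MvPolynomial σ 𝕜) (v : σ → 𝕜) (i : σ)
    (t : 𝕜) :
    HasDerivAt (fun s => eval (Function.update v i s) P)
      (eval (Function.update v i t) (pderiv i P)) t := by
  induction P using MvPolynomial.induction_on with
  | C a => simpa using hasDerivAt_const t a
  | add p q hp hq => simpa using hp.fun_add hq
  | mul_X p j hp =>
    simp only [map_mul, eval_X, pderiv_mul, pderiv_X, map_add]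
    refine (hp.fun_mul (hasDerivAt_update_apply v i j t)).congr_deriv ?_
    rcases eq_or_ne j i with rfl | hji <;> simp [*]

end Derivative

noncomputable def evalFun (P : MvPolynomial (Fin 3) ℝ) : ℝ → ℝ → ℝ → ℝ :=
  fun x y z => eval ![x, y, z] P

theorem qdX_evalFun (P : MvPolynomial (Fin 3) ℝ) : qdX (evalFun P) = evalFun (pderiv 0 P) := by
  funext x y z
  have h := hasDerivAt_eval_update P ![x, y, z] 0 x
  have hv : ∀ s, Function.update ![x, y, z] 0 s = ![s, y, z] := fun s => by
    ext j; fin_cases j <;> rfl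
  simp only [hv] at h
  exact h.deriv

theorem qdY_evalFun (P : MvPolynomial (Fin 3) ℝ) : qdY (evalFun P) = evalFun (pderiv 1 P) := by
  funext x y z
  have h := hasDerivAt_eval_update P ![x, y, z] 1 y
  have hv : ∀ s, Function.update ![x, y, z] 1 s = ![x, s, z] := fun s => by
    ext j; fin_cases j <;> rfl
  simp only [hv] at h
  exact h.deriv

theorem qdZ_evalFun (P : MvPolynomial (Fin 3) ℝ) : qdZ (evalFun P) = evalFun (pderiv 2 P) := by
  funext x y z
  have h := hasDerivAt_eval_update P ![x, y, z] 2 z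
  have hv : ∀ s, Function.update ![x, y, z] 2 s = ![x, y, s] := fun s => by
    ext j; fin_cases j <;> rfl
  simp only [hv] at h
  exact h.deriv

namespace MvPolynomial

variable {σ R : Type*} [CommSemiring R]

variable (R) in
/-- Degrees live in `ℤ` so that subtracting a weight never truncates; the submodule is `⊥` in
negative degrees. -/
noncomputable def weightedDegreeLE (w : σ → ℕ) (n : ℤ) : Submodule R (MvPolynomial σ R) :=
  restrictSupport R {m | (Finsupp.weight w m : ℤ) ≤ n}

variable {w : σ → ℕ} {p q : MvPolynomial σ R} {a b n : ℤ}

theorem mem_weightedDegreeLE :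
    p ∈ weightedDegreeLE R w n ↔ ∀ m ∈ p.support, (Finsupp.weight w m : ℤ) ≤ n :=
  mem_restrictSupport_iff R

theorem weightedDegreeLE_mono (h : a ≤ b) : weightedDegreeLE R w a ≤ weightedDegreeLE R w b :=
  restrictSupport_mono R fun _ hm => le_trans hm h

theorem eq_zero_of_mem_weightedDegreeLE (hp : p ∈ weightedDegreeLE R w n) (hn : n < 0) :
    p = 0 := by
  by_contra h
  obtain ⟨m, hm⟩ := support_nonempty.mpr h
  have := mem_weightedDegreeLE.mp hp m hm
  omega

theorem mem_weightedDegreeLE_weightedTotalDegree (w : σ → ℕ) (p : MvPolynomial σ R) :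
    p ∈ weightedDegreeLE R w (weightedTotalDegree w p : ℕ) :=
  mem_weightedDegreeLE.mpr fun _ hm => by exact_mod_cast le_weightedTotalDegree w hm

theorem X_mem_weightedDegreeLE (i : σ) : X i ∈ weightedDegreeLE R w (w i) := by
  classical
  nontriviality R
  simp [mem_weightedDegreeLE, support_X, Finsupp.weight_single]

theorem mul_mem_weightedDegreeLE (hp : p ∈ weightedDegreeLE R w a)
    (hq : q ∈ weightedDegreeLE R w b) : p * q ∈ weightedDegreeLE R w (a + b) := by
  have hpq := Submodule.mul_mem_mul hp hq
  rw [weightedDegreeLE, weightedDegreeLE, ← restrictSupport_add] at hpq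
  refine restrictSupport_mono R ?_ hpq
  rintro _ ⟨m, hm, m', hm', rfl⟩
  simp only [Set.mem_ofPred_eq, map_add, Nat.cast_add] at hm hm' ⊢
  omega

theorem pderiv_mem_weightedDegreeLE (i : σ) (hp : p ∈ weightedDegreeLE R w n) :
    pderiv i p ∈ weightedDegreeLE R w (n - w i) := by
  rw [mem_weightedDegreeLE] at hp ⊢
  intro m hm
  have hm' : m + Finsupp.single i 1 ∈ p.support := by
    rw [mem_support_iff, coeff_pderiv] at hm
    exact mem_support_iff.mpr (left_ne_zero_of_mul hm)
  have := hp _ hm'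
  simp only [map_add, Finsupp.weight_single, one_smul, Nat.cast_add] at this
  omega

end MvPolynomial

def heisenbergWeight : Fin 3 → ℕ := ![1, 1, 2]

noncomputable def polyT (P : MvPolynomial (Fin 3) ℝ) : MvPolynomial (Fin 3) ℝ :=
  pderiv 0 (pderiv 0 P) + pderiv 1 (pderiv 1 P) + X 0 * pderiv 1 (pderiv 2 P)
    - X 1 * pderiv 0 (pderiv 2 P) + (4⁻¹ : ℝ) • ((X 0 ^ 2 + X 1 ^ 2) * pderiv 2 (pderiv 2 P))

noncomputable def polyU (P : MvPolynomial (Fin 3) ℝ) : MvPolynomial (Fin 3) ℝ :=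
  pderiv 2 (pderiv 2 P)

theorem opT_evalFun (P : MvPolynomial (Fin 3) ℝ) : opT (evalFun P) = evalFun (polyT P) := by
  funext x y z
  simp only [opT, qdX_evalFun, qdY_evalFun, qdZ_evalFun, polyT, evalFun, map_add, map_sub,
    map_mul, map_pow, smul_eval, eval_X, Matrix.cons_val_zero, Matrix.cons_val_one]
  ring

theorem opU_evalFun (P : MvPolynomial (Fin 3) ℝ) : opU (evalFun P) = evalFun (polyU P) := by
  funext x y z
  simp only [opU, qdZ_evalFun, polyU]

section Heisenberg

local notation "𝒟" => weightedDegreeLE ℝ heisenbergWeight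

variable {P : MvPolynomial (Fin 3) ℝ} {n : ℤ}

theorem polyT_mem_weightedDegreeLE (hP : P ∈ 𝒟 n) : polyT P ∈ 𝒟 (n - 2) := by
  have hx : X 0 ∈ 𝒟 1 := X_mem_weightedDegreeLE 0
  have hy : X 1 ∈ 𝒟 1 := X_mem_weightedDegreeLE 1
  have hr : X 0 ^ 2 + X 1 ^ 2 ∈ 𝒟 2 := by
    simpa only [sq, one_add_one_eq_two] using
      add_mem (mul_mem_weightedDegreeLE hx hx) (mul_mem_weightedDegreeLE hy hy)
  have hz : pderiv 2 P ∈ 𝒟 (n - 2) := pderiv_mem_weightedDegreeLE 2 hP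
  have hxx : pderiv 0 (pderiv 0 P) ∈ 𝒟 (n - 1 - 1) :=
    pderiv_mem_weightedDegreeLE 0 (pderiv_mem_weightedDegreeLE 0 hP)
  have hyy : pderiv 1 (pderiv 1 P) ∈ 𝒟 (n - 1 - 1) :=
    pderiv_mem_weightedDegreeLE 1 (pderiv_mem_weightedDegreeLE 1 hP)
  have hyz : pderiv 1 (pderiv 2 P) ∈ 𝒟 (n - 2 - 1) := pderiv_mem_weightedDegreeLE 1 hz
  have hxz : pderiv 0 (pderiv 2 P) ∈ 𝒟 (n - 2 - 1) := pderiv_mem_weightedDegreeLE 0 hz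
  have hzz : pderiv 2 (pderiv 2 P) ∈ 𝒟 (n - 2 - 2) := pderiv_mem_weightedDegreeLE 2 hz
  refine add_mem (sub_mem (add_mem (add_mem ?_ ?_) ?_) ?_) (Submodule.smul_mem _ _ ?_)
  · exact weightedDegreeLE_mono (by omega) hxx
  · exact weightedDegreeLE_mono (by omega) hyy
  · exact weightedDegreeLE_mono (by omega) (mul_mem_weightedDegreeLE hx hyz)
  · exact weightedDegreeLE_mono (by omega) (mul_mem_weightedDegreeLE hy hxz)
  · exact weightedDegreeLE_mono (by omega) (mul_mem_weightedDegreeLE hr hzz)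

theorem polyU_mem_weightedDegreeLE (hP : P ∈ 𝒟 n) : polyU P ∈ 𝒟 (n - 2) := by
  have hzz : polyU P ∈ 𝒟 (n - 2 - 2) :=
    pderiv_mem_weightedDegreeLE 2 (pderiv_mem_weightedDegreeLE 2 hP)
  exact weightedDegreeLE_mono (by omega) hzz

theorem exists_foldr_eq_evalFun (ops : List ((ℝ → ℝ → ℝ → ℝ) → (ℝ → ℝ → ℝ → ℝ)))
    (hops : ∀ o ∈ ops, o = opT ∨ o = opU) (hP : P ∈ 𝒟 n) :
    ∃ Q ∈ 𝒟 (n - 2 * ops.length), ops.foldr (fun o g => o g) (evalFun P) = evalFun Q := by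
  induction ops with
  | nil => exact ⟨P, by simpa using hP, rfl⟩
  | cons o ops ih =>
    obtain ⟨Q, hQ, hfold⟩ := ih fun o' ho' => hops o' (List.mem_cons_of_mem o ho')
    have hlen : n - 2 * (o :: ops).length = n - 2 * ops.length - 2 := by
      simp only [List.length_cons]; push_cast; ring
    rw [List.foldr_cons, hfold, hlen]
    rcases hops o List.mem_cons_self with rfl | rfl
    · exact ⟨polyT Q, polyT_mem_weightedDegreeLE hQ, opT_evalFun Q⟩
    · exact ⟨polyU Q, polyU_mem_weightedDegreeLE hQ, opU_evalFun Q⟩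

end Heisenberg

/-- for every polynomial `h ∈ ℝ[x,y,z]` there is an `r` such that every
composition of `r` operators from `{T, U}` applied to `h` vanishes identically. -/
theorem stmt_12 (P : MvPolynomial (Fin 3) ℝ) :
    ∃ r : ℕ, ∀ ops : List ((ℝ → ℝ → ℝ → ℝ) → (ℝ → ℝ → ℝ → ℝ)),
      (∀ o ∈ ops, o = opT ∨ o = opU) → ops.length = r →
      ∀ x y z : ℝ,
        (ops.foldr (fun o g => o g)
            (fun x y z => MvPolynomial.eval (![x, y, z] : Fin 3 → ℝ) P)) x y z = 0 := by
  set N := weightedTotalDegree heisenbergWeight P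
  refine ⟨N + 1, fun ops hops hlen x y z => ?_⟩
  obtain ⟨Q, hQ, hfold⟩ :=
    exists_foldr_eq_evalFun ops hops (mem_weightedDegreeLE_weightedTotalDegree heisenbergWeight P)
  have hQ0 : Q = 0 := eq_zero_of_mem_weightedDegreeLE hQ (by omega)
  change ops.foldr (fun o g => o g) (evalFun P) x y z = 0
  simp [hfold, hQ0, evalFun]
end
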